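/- arXiv:0803.2797 — 6 statements merged into one kernel-verified Lean document; each statement's English description precedes it below -/
import Mathlib

section
/- Let n ≥ 1, let Ω ⊆ ℝ^n be a nonempty open convex set, let r ≥ 2 and let B be a real n×n matrix with B^r = 0. (i) If f, g : Ω → ℝ are smooth and ∇f = B·∇g on Ω, then there exist smooth functions V_0, …, V_{r−1} : Ω → ℝ with V_{r−2} = f and V_{r−1} = g such that ∇V_i = B^{r−1−i}·∇g on Ω for every 0 ≤ i ≤ r−2; moreover these functions are unique up to additive constants: if Ṽ_0, …, Ṽ_{r−1} is another tuple with Ṽ_{r−2} = f, Ṽ_{r−1} = g and ∇Ṽ_i = B^{r−1−i}·∇g for all 0 ≤ i ≤ r−2, then each V_i − Ṽ_i is constant on Ω. (ii) Conversely, if smooth functions V_0, …, V_{r−1} : Ω → ℝ satisfy ∇V_i = B^{r−1−i}·∇V_{r−1} for all 0 ≤ i ≤ r−2, then the pair f = V_{r−2}, g = V_{r−1} satisfies ∇f = B·∇g on Ω, and B·∇V_0 = 0 on Ω. -/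
/-- The gradient of `f : ℝ^d → ℝ` at `x`: the vector of partial derivatives. -/
noncomputable def grad {d : ℕ} (f : (Fin d → ℝ) → ℝ) (x : Fin d → ℝ) : Fin d → ℝ :=
  fun i => fderiv ℝ f x (Pi.single i 1)

/-!
On a convex open set a closed 1-form is exact (Poincaré lemma). With `T = Bᵀ`, the relation
`∇f = B∇g` says `df = dg ∘ T`; differentiating it and using the symmetry of the second
derivatives of `f` and `g` shows that `T` is self-adjoint for the Hessian form `d²g(x)`, hence so
is every power `T^k`. So the 1-form `dg ∘ T^k` is closed and has a smooth potential `V` with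
`∇V = B^k ∇g`. Uniqueness up to constants holds because `Ω` is connected, and the converse
direction is `B · B^(r-1) = B^r = 0`.
-/

open Matrix
open scoped ContDiff

theorem symm_apply_iterate {M α : Type*} {S : M → M → α} {T : M → M}
    (hS : ∀ u w, S u w = S w u) (hT : ∀ u w, S u (T w) = S w (T u)) (k : ℕ) (u w : M) :
    S u (T^[k] w) = S w (T^[k] u) := by
  induction k generalizing u w with
  | zero => exact hS u w
  | succ k ih =>
    rw [Function.iterate_succ_apply', hT, hS, ih, Function.iterate_succ_apply]

section

variable {E F : Type*} [NormedAddCommGroup E] [NormedSpace ℝ E] [NormedAddCommGroup F]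
  [NormedSpace ℝ F] {Ω : Set E}

theorem Convex.exists_contDiffOn_hasFDerivAt_of_fderiv_symmetric [CompleteSpace F]
    (hconv : Convex ℝ Ω) (hΩ : IsOpen Ω) {η : E → E →L[ℝ] F} (hη : ContDiffOn ℝ ∞ η Ω)
    (hsymm : ∀ x ∈ Ω, ∀ u v, fderiv ℝ η x u v = fderiv ℝ η x v u) :
    ∃ U : E → F, ContDiffOn ℝ ∞ U Ω ∧ ∀ x ∈ Ω, HasFDerivAt U (η x) x := by
  obtain ⟨U, hU⟩ :=
    hconv.exists_forall_hasFDerivAt_of_fderiv_symmetric hΩ (hη.differentiableOn (by simp)) hsymm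
  refine ⟨U, (contDiffOn_infty_iff_fderiv_of_isOpen hΩ).2 ⟨?_, ?_⟩, hU⟩
  · exact fun x hx => (hU x hx).differentiableAt.differentiableWithinAt
  · exact hη.congr fun x hx => (hU x hx).fderiv

theorem fderiv_clm_comp_const_apply {φ : E → E →L[ℝ] F} {x : E} (hφ : DifferentiableAt ℝ φ x)
    (A : E →L[ℝ] E) (u w : E) :
    fderiv ℝ (fun y => (φ y).comp A) x u w = fderiv ℝ φ x u (A w) := by
  rw [fderiv_clm_comp hφ (differentiableAt_const A)]
  simp

variable {f g : E → F} {T : E →L[ℝ] E}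

theorem fderiv_fderiv_apply_pow_symm (hΩ : IsOpen Ω) (hf : ContDiffOn ℝ 2 f Ω)
    (hg : ContDiffOn ℝ 2 g Ω) (hfg : ∀ x ∈ Ω, fderiv ℝ f x = (fderiv ℝ g x).comp T)
    {x : E} (hx : x ∈ Ω) (k : ℕ) (u w : E) :
    fderiv ℝ (fderiv ℝ g) x u ((T ^ k) w) = fderiv ℝ (fderiv ℝ g) x w ((T ^ k) u) := by
  have hgx : ContDiffAt ℝ 2 g x := hg.contDiffAt (hΩ.mem_nhds hx)
  have hfx : ContDiffAt ℝ 2 f x := hf.contDiffAt (hΩ.mem_nhds hx)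
  have hD2f : ∀ u w, fderiv ℝ (fderiv ℝ f) x u w = fderiv ℝ (fderiv ℝ g) x u (T w) := by
    intro u w
    rw [Filter.EventuallyEq.fderiv_eq (Filter.eventuallyEq_of_mem (hΩ.mem_nhds hx) hfg)]
    exact fderiv_clm_comp_const_apply
      ((hgx.fderiv_right (m := 1) le_rfl).differentiableAt one_ne_zero) T u w
  have hTsymm : ∀ u w, fderiv ℝ (fderiv ℝ g) x u (T w) = fderiv ℝ (fderiv ℝ g) x w (T u) := by
    intro u w
    rw [← hD2f, ← hD2f, hfx.isSymmSndFDerivAt (by simp)]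
  rw [FunLike.coe_pow_eq_iterate]
  exact symm_apply_iterate (hgx.isSymmSndFDerivAt (by simp)) hTsymm k u w

theorem Convex.exists_hasFDerivAt_fderiv_comp_pow [CompleteSpace F] (hconv : Convex ℝ Ω)
    (hΩ : IsOpen Ω) (hf : ContDiffOn ℝ 2 f Ω) (hg : ContDiffOn ℝ ∞ g Ω)
    (hfg : ∀ x ∈ Ω, fderiv ℝ f x = (fderiv ℝ g x).comp T) (k : ℕ) :
    ∃ U : E → F, ContDiffOn ℝ ∞ U Ω ∧
      ∀ x ∈ Ω, HasFDerivAt U ((fderiv ℝ g x).comp (T ^ k)) x := by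
  have hDg : ContDiffOn ℝ ∞ (fderiv ℝ g) Ω := hg.fderiv_of_isOpen hΩ le_rfl
  refine hconv.exists_contDiffOn_hasFDerivAt_of_fderiv_symmetric hΩ
    (hDg.clm_comp contDiffOn_const) fun x hx u w => ?_
  have hDgx : DifferentiableAt ℝ (fderiv ℝ g) x :=
    (hDg.contDiffAt (hΩ.mem_nhds hx)).differentiableAt (by simp)
  rw [fderiv_clm_comp_const_apply hDgx, fderiv_clm_comp_const_apply hDgx]
  exact fderiv_fderiv_apply_pow_symm hΩ hf (hg.of_le (by norm_cast)) hfg hx k u w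

end

section

variable {n : ℕ} {Ω : Set (Fin n → ℝ)} {f g : (Fin n → ℝ) → ℝ}

theorem fderiv_apply_eq_grad_dotProduct (f : (Fin n → ℝ) → ℝ) (x v : Fin n → ℝ) :
    fderiv ℝ f x v = grad f x ⬝ᵥ v := by
  conv_lhs => rw [← Finset.univ_sum_single v]
  refine (map_sum _ _ _).trans (Finset.sum_congr rfl fun i _ => ?_)
  rw [grad, mul_comm, ← smul_eq_mul, ← map_smul, ← Pi.single_smul, smul_eq_mul, mul_one]

theorem grad_eq_mulVec_grad_iff (B : Matrix (Fin n) (Fin n) ℝ) {x : Fin n → ℝ} :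
    grad f x = B *ᵥ grad g x ↔ ∀ v, fderiv ℝ f x v = fderiv ℝ g x (Bᵀ *ᵥ v) := by
  simp only [fderiv_apply_eq_grad_dotProduct, dotProduct_mulVec, vecMul_transpose]
  exact dotProduct_eq_iff.symm

theorem toContinuousLinearMap_toLin'_pow_apply (M : Matrix (Fin n) (Fin n) ℝ) (k : ℕ)
    (v : Fin n → ℝ) : (LinearMap.toContinuousLinearMap (toLin' M) ^ k) v = (M ^ k) *ᵥ v := by
  rw [← ContinuousLinearMap.coe_coe, ContinuousLinearMap.toLinearMap_pow,
    LinearMap.coe_toContinuousLinearMap, ← toLin'_pow, toLin'_apply]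

theorem Convex.exists_grad_eq_pow_mulVec_grad (hconv : Convex ℝ Ω) (hΩ : IsOpen Ω)
    {B : Matrix (Fin n) (Fin n) ℝ} (hf : ContDiffOn ℝ 2 f Ω) (hg : ContDiffOn ℝ ∞ g Ω)
    (hfg : ∀ x ∈ Ω, grad f x = B *ᵥ grad g x) (k : ℕ) :
    ∃ U, ContDiffOn ℝ ∞ U Ω ∧ ∀ x ∈ Ω, grad U x = (B ^ k) *ᵥ grad g x := by
  have hfg' : ∀ x ∈ Ω,
      fderiv ℝ f x = (fderiv ℝ g x).comp (LinearMap.toContinuousLinearMap (toLin' Bᵀ)) :=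
    fun x hx => ContinuousLinearMap.ext ((grad_eq_mulVec_grad_iff B).1 (hfg x hx))
  obtain ⟨U, hUsmooth, hU⟩ := hconv.exists_hasFDerivAt_fderiv_comp_pow hΩ hf hg hfg' k
  refine ⟨U, hUsmooth, fun x hx => (grad_eq_mulVec_grad_iff _).2 fun v => ?_⟩
  rw [(hU x hx).fderiv, ContinuousLinearMap.comp_apply, toContinuousLinearMap_toLin'_pow_apply,
    transpose_pow]

theorem Convex.exists_sub_eq_of_grad_eq (hconv : Convex ℝ Ω) (hΩ : IsOpen Ω)
    (hf : DifferentiableOn ℝ f Ω) (hg : DifferentiableOn ℝ g Ω)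
    (hfg : ∀ x ∈ Ω, grad f x = grad g x) : ∃ c, ∀ x ∈ Ω, f x - g x = c := by
  obtain ⟨c, hc⟩ := hΩ.exists_eq_add_of_fderiv_eq hconv.isPreconnected hf hg fun x hx =>
    ContinuousLinearMap.ext fun v => by simp only [fderiv_apply_eq_grad_dotProduct, hfg x hx]
  exact ⟨c, fun x hx => by rw [hc hx]; ring⟩

end

theorem stmt_4_general (n : ℕ) (Ω : Set (Fin n → ℝ)) (hΩo : IsOpen Ω)
    (hconv : Convex ℝ Ω) (r : ℕ) (hr : 2 ≤ r)
    (B : Matrix (Fin n) (Fin n) ℝ) (hB : B ^ r = 0) :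
    (∀ f g : (Fin n → ℝ) → ℝ, ContDiffOn ℝ (⊤ : ℕ∞) f Ω → ContDiffOn ℝ (⊤ : ℕ∞) g Ω →
      (∀ x ∈ Ω, grad f x = B.mulVec (grad g x)) →
      (∃ V : ℕ → ((Fin n → ℝ) → ℝ), V (r - 2) = f ∧ V (r - 1) = g ∧
          (∀ i ≤ r - 1, ContDiffOn ℝ (⊤ : ℕ∞) (V i) Ω) ∧
          (∀ i ≤ r - 2, ∀ x ∈ Ω, grad (V i) x = (B ^ (r - 1 - i)).mulVec (grad g x))) ∧
      (∀ V W : ℕ → ((Fin n → ℝ) → ℝ),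
        (∀ i ≤ r - 1, ContDiffOn ℝ (⊤ : ℕ∞) (V i) Ω) →
        (∀ i ≤ r - 1, ContDiffOn ℝ (⊤ : ℕ∞) (W i) Ω) →
        V (r - 2) = f → V (r - 1) = g → W (r - 2) = f → W (r - 1) = g →
        (∀ i ≤ r - 2, ∀ x ∈ Ω, grad (V i) x = (B ^ (r - 1 - i)).mulVec (grad g x)) →
        (∀ i ≤ r - 2, ∀ x ∈ Ω, grad (W i) x = (B ^ (r - 1 - i)).mulVec (grad g x)) →
        ∀ i ≤ r - 1, ∃ c : ℝ, ∀ x ∈ Ω, V i x - W i x = c)) ∧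
    (∀ V : ℕ → ((Fin n → ℝ) → ℝ),
      (∀ i ≤ r - 1, ContDiffOn ℝ (⊤ : ℕ∞) (V i) Ω) →
      (∀ i ≤ r - 2, ∀ x ∈ Ω, grad (V i) x = (B ^ (r - 1 - i)).mulVec (grad (V (r - 1)) x)) →
      (∀ x ∈ Ω, grad (V (r - 2)) x = B.mulVec (grad (V (r - 1)) x)) ∧
      (∀ x ∈ Ω, B.mulVec (grad (V 0) x) = 0)) := by
  have hsub : r - 1 - (r - 2) = 1 := by omega
  refine ⟨fun f g hf hg hfg => ⟨?_, ?_⟩, fun V _ hV => ⟨fun x hx => ?_, fun x hx => ?_⟩⟩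
  · choose U hUsmooth hU using
      hconv.exists_grad_eq_pow_mulVec_grad hΩo (hf.of_le (by norm_cast)) hg hfg
    refine ⟨fun i => if i = r - 1 then g else if i = r - 2 then f else U (r - 1 - i),
      by simp [show r - 2 ≠ r - 1 by omega], by simp, fun i _ => ?_, fun i hi x hx => ?_⟩
    · dsimp only
      split_ifs
      exacts [hg, hf, hUsmooth _]
    · simp only [if_neg (show i ≠ r - 1 by omega)]
      split_ifs with h
      · rw [h, hsub, pow_one]
        exact hfg x hx
      · exact hU _ x hx
  · intro V W hV hW _ hV1 _ hW1 hVgrad hWgrad i hi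
    refine hconv.exists_sub_eq_of_grad_eq hΩo ((hV i hi).differentiableOn (by simp))
      ((hW i hi).differentiableOn (by simp)) fun x hx => ?_
    rcases (show i ≤ r - 2 ∨ i = r - 1 by omega) with hi | rfl
    · rw [hVgrad i hi x hx, hWgrad i hi x hx]
    · rw [hV1, hW1]
  · simpa [hsub] using hV (r - 2) le_rfl x hx
  · rw [hV 0 (Nat.zero_le _) x hx, mulVec_mulVec, ← pow_succ', Nat.sub_zero,
      Nat.sub_add_cancel (by omega), hB, zero_mulVec]

/-- Extension of `∇f = B∇g` (`B` nilpotent, `B^r = 0`) to the μ-dependent system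
`(−B + μI)∇V_μ ≡ 0 (mod μ^r)`:
(i) any smooth solution `(f, g)` on a nonempty open convex `Ω` extends to smooth
`V_0, …, V_{r−1}` with `V_{r−2} = f`, `V_{r−1} = g` and `∇V_i = B^{r−1−i}∇g`,
uniquely up to additive constants; (ii) conversely any such tuple yields a
solution of `∇f = B∇g`, and moreover `B∇V_0 = 0`. -/
theorem stmt_4 (n : ℕ) (hn : 1 ≤ n) (Ω : Set (Fin n → ℝ)) (hΩo : IsOpen Ω)
    (hconv : Convex ℝ Ω) (hne : Ω.Nonempty) (r : ℕ) (hr : 2 ≤ r)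
    (B : Matrix (Fin n) (Fin n) ℝ) (hB : B ^ r = 0) :
    (∀ f g : (Fin n → ℝ) → ℝ, ContDiffOn ℝ (⊤ : ℕ∞) f Ω → ContDiffOn ℝ (⊤ : ℕ∞) g Ω →
      (∀ x ∈ Ω, grad f x = B.mulVec (grad g x)) →
      (∃ V : ℕ → ((Fin n → ℝ) → ℝ), V (r - 2) = f ∧ V (r - 1) = g ∧
          (∀ i ≤ r - 1, ContDiffOn ℝ (⊤ : ℕ∞) (V i) Ω) ∧
          (∀ i ≤ r - 2, ∀ x ∈ Ω, grad (V i) x = (B ^ (r - 1 - i)).mulVec (grad g x))) ∧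
      (∀ V W : ℕ → ((Fin n → ℝ) → ℝ),
        (∀ i ≤ r - 1, ContDiffOn ℝ (⊤ : ℕ∞) (V i) Ω) →
        (∀ i ≤ r - 1, ContDiffOn ℝ (⊤ : ℕ∞) (W i) Ω) →
        V (r - 2) = f → V (r - 1) = g → W (r - 2) = f → W (r - 1) = g →
        (∀ i ≤ r - 2, ∀ x ∈ Ω, grad (V i) x = (B ^ (r - 1 - i)).mulVec (grad g x)) →
        (∀ i ≤ r - 2, ∀ x ∈ Ω, grad (W i) x = (B ^ (r - 1 - i)).mulVec (grad g x)) →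
        ∀ i ≤ r - 1, ∃ c : ℝ, ∀ x ∈ Ω, V i x - W i x = c)) ∧
    (∀ V : ℕ → ((Fin n → ℝ) → ℝ),
      (∀ i ≤ r - 1, ContDiffOn ℝ (⊤ : ℕ∞) (V i) Ω) →
      (∀ i ≤ r - 2, ∀ x ∈ Ω, grad (V i) x = (B ^ (r - 1 - i)).mulVec (grad (V (r - 1)) x)) →
      (∀ x ∈ Ω, grad (V (r - 2)) x = B.mulVec (grad (V (r - 1)) x)) ∧
      (∀ x ∈ Ω, B.mulVec (grad (V 0) x) = 0)) :=
  stmt_4_general n Ω hΩo hconv r hr B hB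
end

section
/- Let n ≥ 1, let Ω ⊆ ℝ^n be a nonempty open convex set, let B be a real n×n matrix and let f : Ω → ℝ be smooth. Suppose that for all x ∈ Ω and all 1 ≤ i, j ≤ n we have ∂_i((B∇f)_j)(x) = ∂_j((B∇f)_i)(x), where (B∇f)_j denotes the j-th component of the map x ↦ B·∇f(x). Then for every k ∈ ℕ, all x ∈ Ω and all 1 ≤ i, j ≤ n: ∂_i((B^k∇f)_j)(x) = ∂_j((B^k∇f)_i)(x). -/
open Matrix

noncomputable def hessianMatrix {d : ℕ} (f : (Fin d → ℝ) → ℝ) (x : Fin d → ℝ) :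
    Matrix (Fin d) (Fin d) ℝ :=
  of fun i j => fderiv ℝ (fderiv ℝ f) x (Pi.single i 1) (Pi.single j 1)

theorem Matrix.IsSymm.isSymm_mul_transpose_pow {ι R : Type*} [Fintype ι] [DecidableEq ι]
    [CommSemiring R] {H B : Matrix ι ι R} (hH : H.IsSymm) (hHB : (H * Bᵀ).IsSymm) (k : ℕ) :
    (H * (B ^ k)ᵀ).IsSymm := by
  have hsemiconj : SemiconjBy H Bᵀ B := by
    simpa only [SemiconjBy, IsSymm, transpose_mul, transpose_transpose, hH.eq] using hHB.symm
  rw [IsSymm, transpose_pow, transpose_mul, transpose_pow, transpose_transpose, hH.eq,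
    (hsemiconj.pow_right k).eq]

section Hessian

variable {d : ℕ} {f : (Fin d → ℝ) → ℝ} {x : Fin d → ℝ}

theorem isSymm_hessianMatrix (hf : ContDiffAt ℝ 2 f x) : (hessianMatrix f x).IsSymm :=
  IsSymm.ext fun i j => hf.isSymmSndFDerivAt (by simp) (Pi.single j 1) (Pi.single i 1)

theorem hasFDerivAt_grad_apply (hf : DifferentiableAt ℝ (fderiv ℝ f) x) (l : Fin d) :
    HasFDerivAt (fun y => grad f y l)
      ((ContinuousLinearMap.apply ℝ ℝ (Pi.single l 1)).comp (fderiv ℝ (fderiv ℝ f) x)) x := by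
  exact (ContinuousLinearMap.apply ℝ ℝ (Pi.single l 1)).hasFDerivAt.comp x hf.hasFDerivAt

theorem fderiv_mulVec_grad_apply (hf : ContDiffAt ℝ 2 f x) (M : Matrix (Fin d) (Fin d) ℝ)
    (i j : Fin d) :
    fderiv ℝ (fun y => M.mulVec (grad f y) j) x (Pi.single i 1)
      = (hessianMatrix f x * Mᵀ) i j := by
  have hf' : DifferentiableAt ℝ (fderiv ℝ f) x :=
    (hf.fderiv_right (m := 1) le_rfl).differentiableAt one_ne_zero
  have hderiv : HasFDerivAt (fun y => M.mulVec (grad f y) j)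
      (∑ l, M j l • (ContinuousLinearMap.apply ℝ ℝ (Pi.single l 1)).comp
        (fderiv ℝ (fderiv ℝ f) x)) x := by
    simp only [mulVec, dotProduct]
    exact HasFDerivAt.fun_sum fun l _ => (hasFDerivAt_grad_apply hf' l).const_mul (M j l)
  rw [hderiv.fderiv]
  simp [mul_apply, hessianMatrix, mul_comm]

end Hessian

theorem stmt_7_general (n : ℕ) (Ω : Set (Fin n → ℝ)) (hΩo : IsOpen Ω)
    (B : Matrix (Fin n) (Fin n) ℝ) (f : (Fin n → ℝ) → ℝ)
    (hf : ContDiffOn ℝ (⊤ : ℕ∞) f Ω)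
    (hclosed : ∀ x ∈ Ω, ∀ i j : Fin n,
      fderiv ℝ (fun y => B.mulVec (grad f y) j) x (Pi.single i 1)
        = fderiv ℝ (fun y => B.mulVec (grad f y) i) x (Pi.single j 1)) :
    ∀ k : ℕ, ∀ x ∈ Ω, ∀ i j : Fin n,
      fderiv ℝ (fun y => (B ^ k).mulVec (grad f y) j) x (Pi.single i 1)
        = fderiv ℝ (fun y => (B ^ k).mulVec (grad f y) i) x (Pi.single j 1) := by
  intro k x hx i j
  have hfx : ContDiffAt ℝ 2 f x :=
    (hf.contDiffAt (hΩo.mem_nhds hx)).of_le (WithTop.coe_le_coe.mpr le_top)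
  have hHB : (hessianMatrix f x * Bᵀ).IsSymm := by
    ext a b
    simpa only [transpose_apply, fderiv_mulVec_grad_apply hfx] using hclosed x hx b a
  simp only [fderiv_mulVec_grad_apply hfx]
  exact ((isSymm_hessianMatrix hfx).isSymm_mul_transpose_pow hHB k).apply j i

/-- If `B df` is a closed 1-form (the mixed partials of `B∇f` are symmetric) on a
nonempty open convex set `Ω`, then `B^k df` is closed for every `k ∈ ℕ`. -/
theorem stmt_7 (n : ℕ) (hn : 1 ≤ n) (Ω : Set (Fin n → ℝ)) (hΩo : IsOpen Ω)
    (hconv : Convex ℝ Ω) (hne : Ω.Nonempty)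
    (B : Matrix (Fin n) (Fin n) ℝ) (f : (Fin n → ℝ) → ℝ)
    (hf : ContDiffOn ℝ (⊤ : ℕ∞) f Ω)
    (hclosed : ∀ x ∈ Ω, ∀ i j : Fin n,
      fderiv ℝ (fun y => B.mulVec (grad f y) j) x (Pi.single i 1)
        = fderiv ℝ (fun y => B.mulVec (grad f y) i) x (Pi.single j 1)) :
    ∀ k : ℕ, ∀ x ∈ Ω, ∀ i j : Fin n,
      fderiv ℝ (fun y => (B ^ k).mulVec (grad f y) j) x (Pi.single i 1)
        = fderiv ℝ (fun y => (B ^ k).mulVec (grad f y) i) x (Pi.single j 1) :=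
  stmt_7_general n Ω hΩo B f hf hclosed
end

section
/- Let R be a commutative ring, r ≥ 1, and let n_1 ≥ n_2 ≥ ⋯ ≥ n_r ≥ 0 be integers. Let p_1, …, p_r ∈ R[μ] be polynomials with deg p_s ≤ n_s, and let i_1, …, i_r ∈ ℕ. Define q_r := p_r^{i_r} mod μ^{n_r+1}, and recursively for s = r−1 down to 1: q_s := ( p_s^{i_s} · μ^{n_s − n_{s+1}} · q_{s+1} ) mod μ^{n_s+1}, where 'mod μ^d' denotes truncation of a polynomial to degree < d. Then q_1 = μ^{n_1 − n_r} · ( (∏_{s=1}^r p_s^{i_s}) mod μ^{n_r+1} ). In particular, for 0 ≤ j ≤ n_r the coefficient of μ^{n_1−n_r+j} in q_1 equals the coefficient of μ^j in ∏_{s=1}^r p_s^{i_s}, and all other coefficients of q_1 vanish. -/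
/-!
Multiplying by `X ^ e` shifts coefficients by `e`, so reducing `X ^ e * p` modulo `X ^ (e + m)` is
the same as shifting `p` reduced modulo `X ^ m`; and reduction modulo `X ^ m` may be applied to a
factor before multiplying. Hence each step of the recursion pulls one more factor `p_s ^ i_s` into
the truncated product, while the shifts `n_s - n_{s+1}` telescope to `n_1 - n_r`.
-/

open Polynomial

namespace Polynomial

variable {R : Type*} [CommRing R]

theorem coeff_modByMonic_X_pow (p : R[X]) (d j : ℕ) :
    (p %ₘ X ^ d).coeff j = if j < d then p.coeff j else 0 := by
  nontriviality R
  split_ifs with hj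
  · rw [modByMonic_eq_sub_mul_div p (X ^ d), coeff_sub, coeff_X_pow_mul', if_neg (by omega),
      sub_zero]
  · refine coeff_eq_zero_of_degree_lt ((degree_modByMonic_lt p (monic_X_pow d)).trans_le ?_)
    rw [degree_X_pow]
    exact_mod_cast not_lt.mp hj

theorem mul_modByMonic_modByMonic {q : R[X]} (hq : q.Monic) (p₁ p₂ : R[X]) :
    (p₁ * (p₂ %ₘ q)) %ₘ q = (p₁ * p₂) %ₘ q :=
  modByMonic_eq_of_dvd_sub hq (by rw [← mul_sub]; exact (dvd_modByMonic_sub p₂ q).mul_left p₁)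

theorem X_pow_mul_modByMonic_X_pow_add (p : R[X]) (e m : ℕ) :
    (X ^ e * p) %ₘ X ^ (e + m) = X ^ e * (p %ₘ X ^ m) := by
  ext k
  simp only [coeff_modByMonic_X_pow, coeff_X_pow_mul']
  split_ifs <;> first | rfl | omega

theorem coeff_X_pow_mul_modByMonic_X_pow (p : R[X]) (e m t : ℕ) :
    (X ^ e * (p %ₘ X ^ m)).coeff t = if e ≤ t ∧ t < e + m then p.coeff (t - e) else 0 := by
  rw [coeff_X_pow_mul', coeff_modByMonic_X_pow]
  split_ifs <;> first | rfl | omega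

end Polynomial

theorem eq_X_pow_mul_prod_modByMonic_of_rec {R : Type*} [CommRing R] {r : ℕ} {n : ℕ → ℕ}
    (hn : AntitoneOn n (Set.Icc 1 r)) {f q : ℕ → R[X]}
    (hqr : q r = f r %ₘ X ^ (n r + 1))
    (hq : ∀ s, 1 ≤ s → s < r → q s = (f s * X ^ (n s - n (s + 1)) * q (s + 1)) %ₘ X ^ (n s + 1))
    {s : ℕ} (hs : 1 ≤ s) (hsr : s ≤ r) :
    q s = X ^ (n s - n r) * ((∏ t ∈ Finset.Icc s r, f t) %ₘ X ^ (n r + 1)) := by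
  induction hsr using Nat.decreasingInduction with
  | self => simp [hqr]
  | of_succ s hsr ih =>
    set P := ∏ t ∈ Finset.Icc (s + 1) r, f t
    have hsucc : n (s + 1) ≤ n s := hn ⟨hs, hsr.le⟩ ⟨by omega, hsr⟩ (by omega)
    have hlast : n r ≤ n (s + 1) := hn ⟨by omega, hsr⟩ ⟨by omega, le_rfl⟩ hsr
    have hshift : X ^ (n s - n (s + 1)) * X ^ (n (s + 1) - n r) = (X ^ (n s - n r) : R[X]) := by
      rw [← pow_add]; congr 1; omega
    calc q s
        = (f s * X ^ (n s - n (s + 1)) * (X ^ (n (s + 1) - n r) * (P %ₘ X ^ (n r + 1)))) %ₘ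
            X ^ (n s + 1) := by rw [hq s hs hsr, ih (by omega)]
      _ = (X ^ (n s - n r) * (f s * (P %ₘ X ^ (n r + 1)))) %ₘ X ^ (n s - n r + (n r + 1)) := by
          rw [← hshift, show n s - n r + (n r + 1) = n s + 1 by omega]; congr 1; ring
      _ = X ^ (n s - n r) * ((f s * P) %ₘ X ^ (n r + 1)) := by
          rw [X_pow_mul_modByMonic_X_pow_add, mul_modByMonic_modByMonic (monic_X_pow _)]
      _ = X ^ (n s - n r) * ((∏ t ∈ Finset.Icc s r, f t) %ₘ X ^ (n r + 1)) := by
          rw [← Finset.insert_Icc_add_one_left_eq_Icc hsr.le, Finset.prod_insert (by simp)]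

theorem stmt_9_general (R : Type*) [CommRing R] (r : ℕ) (hr : 1 ≤ r) (n : ℕ → ℕ)
    (hmono : ∀ s, 1 ≤ s → s < r → n (s + 1) ≤ n s)
    (p : ℕ → Polynomial R)
    (i : ℕ → ℕ) (q : ℕ → Polynomial R)
    (hqr : q r = (p r ^ i r) %ₘ (X ^ (n r + 1)))
    (hq : ∀ s, 1 ≤ s → s < r →
      q s = ((p s ^ i s) * X ^ (n s - n (s + 1)) * q (s + 1)) %ₘ (X ^ (n s + 1))) :
    q 1 = X ^ (n 1 - n r) * ((∏ s ∈ Finset.Icc 1 r, p s ^ i s) %ₘ (X ^ (n r + 1))) ∧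
    (∀ j ≤ n r,
      (q 1).coeff (n 1 - n r + j) = (∏ s ∈ Finset.Icc 1 r, p s ^ i s).coeff j) ∧
    (∀ t : ℕ, (t < n 1 - n r ∨ n 1 < t) → (q 1).coeff t = 0) := by
  have hn : AntitoneOn n (Set.Icc 1 r) := antitoneOn_of_succ_le Set.ordConnected_Icc
    fun s _ hs hs' => by simpa using hmono s hs.1 (by simpa using hs'.2)
  have hnr : n r ≤ n 1 := hn ⟨le_rfl, hr⟩ ⟨hr, le_rfl⟩ hr
  have hq1 := eq_X_pow_mul_prod_modByMonic_of_rec (f := fun s => p s ^ i s) hn hqr hq le_rfl hr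
  refine ⟨hq1, fun j hj => ?_, fun t ht => ?_⟩ <;> rw [hq1, coeff_X_pow_mul_modByMonic_X_pow]
  · rw [if_pos (by omega), Nat.add_sub_cancel_left]
  · rw [if_neg (by omega)]

/-- Structure lemma for the iterated embedded *-powers: if
`q_r = p_r^{i_r} mod μ^{n_r+1}` and
`q_s = (p_s^{i_s} · μ^{n_s−n_{s+1}} · q_{s+1}) mod μ^{n_s+1}` for `1 ≤ s < r`
(`n_1 ≥ ⋯ ≥ n_r`, `deg p_s ≤ n_s`), then
`q_1 = μ^{n_1−n_r} · ((∏_{s=1}^r p_s^{i_s}) mod μ^{n_r+1})`; in particular the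
coefficient of `μ^{n_1−n_r+j}` in `q_1` is the coefficient of `μ^j` in the full
product for `0 ≤ j ≤ n_r`, and all other coefficients of `q_1` vanish. -/
theorem stmt_9 (R : Type*) [CommRing R] (r : ℕ) (hr : 1 ≤ r) (n : ℕ → ℕ)
    (hmono : ∀ s, 1 ≤ s → s < r → n (s + 1) ≤ n s)
    (p : ℕ → Polynomial R) (hdeg : ∀ s, 1 ≤ s → s ≤ r → (p s).degree ≤ (n s : ℕ))
    (i : ℕ → ℕ) (q : ℕ → Polynomial R)
    (hqr : q r = (p r ^ i r) %ₘ (X ^ (n r + 1)))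
    (hq : ∀ s, 1 ≤ s → s < r →
      q s = ((p s ^ i s) * X ^ (n s - n (s + 1)) * q (s + 1)) %ₘ (X ^ (n s + 1))) :
    q 1 = X ^ (n 1 - n r) * ((∏ s ∈ Finset.Icc 1 r, p s ^ i s) %ₘ (X ^ (n r + 1))) ∧
    (∀ j ≤ n r,
      (q 1).coeff (n 1 - n r + j) = (∏ s ∈ Finset.Icc 1 r, p s ^ i s).coeff j) ∧
    (∀ t : ℕ, (t < n 1 - n r ∨ n 1 < t) → (q 1).coeff t = 0) :=
  stmt_9_general R r hr n hmono p i q hqr hq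
end

section
/- Let n ≥ 0, let M be the single real Jordan block of size 2(n+1) with eigenvalues ±i (2×2 blocks Λ = [[0,1],[−1,0]] on the block diagonal, the 2×2 identity on the block superdiagonal, zero blocks elsewhere), and let N = −(M^{−1})^T. Let C be the companion matrix of the monic polynomial (1+μ²)^{n+1} = Z_0 + Z_1μ + ⋯ + Z_{2n+1}μ^{2n+1} + μ^{2n+2}: the (2n+2)×(2n+2) matrix with ones on the subdiagonal, last column (−Z_0, −Z_1, …, −Z_{2n+1})^T, and zeros elsewhere. Let B be the real (2n+2)×(2n+2) matrix whose j-th column equals N^{j−1}·e_1 for j = 1, …, 2n+2, where e_1 is the first standard basis vector. Then B is invertible and N·B = B·C. -/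
/-!
Write `Jblock n = J + S`, where `J` is the block-diagonal rotation (`J * J = -1`) and `S` the
nilpotent shift by one block, which commutes with `J`. Then `1 + M² = (2J + S) S`, and
`N = -(Mᵀ)⁻¹` satisfies `1 + N² = N² (1 + Mᵀ²)`, so `(1 + N²)^k` is a unit times `(Sᵀ)^k`:
it vanishes for `k = n + 1`, while `(1 + N²)^n e₁ ≠ 0`. As `1 + X²` is prime in `ℝ[X]`, the
polynomials killing `e₁` are exactly the multiples of `(1 + X²)^(n+1)`, whose degree is the
dimension. Hence `e₁, N e₁, …, N^(2n+1) e₁` is a basis, and since `(1 + X²)^(n+1)` kills `e₁`,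
`N` acts on this basis by the companion matrix.
-/

open Polynomial Matrix

/-- The single real Jordan block of size `2(n+1)` with eigenvalues `±i`:
`Λ = [[0,1],[−1,0]]` on the 2×2 block diagonal, the 2×2 identity on the 2×2 block
superdiagonal, zero blocks elsewhere. -/
def Jblock (n : ℕ) : Matrix (Fin (2 * (n + 1))) (Fin (2 * (n + 1))) ℝ :=
  Matrix.of fun a b =>
    if (a : ℕ) % 2 = 0 ∧ (b : ℕ) = (a : ℕ) + 1 then 1
    else if (a : ℕ) % 2 = 1 ∧ (a : ℕ) = (b : ℕ) + 1 then -1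
    else if (b : ℕ) = (a : ℕ) + 2 then 1 else 0

theorem sum_ite_val_eq {M : Type*} [AddCommMonoid M] {m : ℕ} (k : ℕ) (f : Fin m → M) :
    ∑ c : Fin m, (if (c : ℕ) = k then f c else 0) = if h : k < m then f ⟨k, h⟩ else 0 := by
  split_ifs with h
  · rw [Fintype.sum_eq_single ⟨k, h⟩ fun c hc => if_neg fun hck => hc (Fin.ext hck)]
    simp
  · exact Finset.sum_eq_zero fun c _ => if_neg (by omega)

section Krylov

variable {R : Type*} [CommRing R] {d : ℕ}

def krylovMatrix (N : Matrix (Fin d) (Fin d) R) (v : Fin d → R) : Matrix (Fin d) (Fin d) R :=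
  of fun i j => (N ^ (j : ℕ) *ᵥ v) i

def companionMatrix (d : ℕ) (p : R[X]) : Matrix (Fin d) (Fin d) R :=
  of fun i j => if (j : ℕ) + 1 = d then -p.coeff i else if (i : ℕ) = j + 1 then 1 else 0

theorem aeval_mulVec_eq_sum (N : Matrix (Fin d) (Fin d) R) (v : Fin d → R) {p : R[X]}
    {m : ℕ} (hp : p.natDegree < m) :
    aeval N p *ᵥ v = ∑ k ∈ Finset.range m, p.coeff k • (N ^ k *ᵥ v) := by
  rw [aeval_eq_sum_range' hp, Matrix.sum_mulVec]
  simp only [Matrix.smul_mulVec]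

theorem pow_mulVec_eq_neg_sum_of_monic {N : Matrix (Fin d) (Fin d) R} {v : Fin d → R}
    {p : R[X]} (hmonic : p.Monic) (hdeg : p.natDegree = d) (hp : aeval N p *ᵥ v = 0) :
    N ^ d *ᵥ v = -∑ k : Fin d, p.coeff k • (N ^ (k : ℕ) *ᵥ v) := by
  have htop : p.coeff d = 1 := hdeg ▸ hmonic.coeff_natDegree
  rw [aeval_mulVec_eq_sum N v (m := d + 1) (by omega), Finset.sum_range_succ, htop, one_smul,
    Finset.sum_range] at hp
  exact eq_neg_of_add_eq_zero_right hp

theorem mul_krylovMatrix_eq_krylovMatrix_mul_companionMatrix {N : Matrix (Fin d) (Fin d) R}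
    {v : Fin d → R} {p : R[X]} (hmonic : p.Monic) (hdeg : p.natDegree = d)
    (hp : aeval N p *ᵥ v = 0) :
    N * krylovMatrix N v = krylovMatrix N v * companionMatrix d p := by
  ext i j
  have hcol : (N * krylovMatrix N v) i j = (N ^ ((j : ℕ) + 1) *ᵥ v) i := by
    rw [pow_succ', ← mulVec_mulVec]; rfl
  rw [hcol, mul_apply]
  by_cases hj : (j : ℕ) + 1 = d
  · simp only [companionMatrix, krylovMatrix, of_apply, hj,
      pow_mulVec_eq_neg_sum_of_monic hmonic hdeg hp]
    simp [Finset.sum_apply, mul_comm]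
  · simp only [companionMatrix, of_apply, if_neg hj, mul_ite, mul_one, mul_zero, sum_ite_val_eq,
      dif_pos (show (j : ℕ) + 1 < d by omega)]
    rfl

variable {K : Type*} [Field K]

theorem isUnit_krylovMatrix {N : Matrix (Fin d) (Fin d) K} {v : Fin d → K}
    (h : ∀ q : K[X], q.degree < d → aeval N q *ᵥ v = 0 → q = 0) :
    IsUnit (krylovMatrix N v) := by
  rw [← linearIndependent_cols_iff_isUnit, Fintype.linearIndependent_iff]
  intro c hc
  have hq := h (∑ i : Fin d, C (c i) * X ^ (i : ℕ)) (degree_sum_fin_lt c) (by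
    rw [← hc, map_sum, Matrix.sum_mulVec]
    simp only [map_mul, aeval_C, map_pow, aeval_X, ← Algebra.smul_def, Matrix.smul_mulVec]
    rfl)
  intro i
  simpa [finsetSum_coeff, coeff_C_mul_X_pow, Fin.val_eq_val] using congrArg (coeff · i) hq

end Krylov

section Annihilator

variable {K : Type*} [Field K] {m : Type*} [Fintype m] [DecidableEq m]
  {N : Matrix m m K} {v : m → K}

theorem aeval_mulVec_eq_zero_of_dvd {a b : K[X]} (hab : a ∣ b) (ha : aeval N a *ᵥ v = 0) :
    aeval N b *ᵥ v = 0 := by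
  obtain ⟨c, rfl⟩ := hab
  rw [mul_comm, map_mul, ← mulVec_mulVec, ha, mulVec_zero]

theorem pow_succ_dvd_of_aeval_mulVec_eq_zero {q : K[X]} (hq : Prime q) {k : ℕ}
    (hkill : aeval N (q ^ (k + 1)) *ᵥ v = 0) (hv : aeval N (q ^ k) *ᵥ v ≠ 0) {r : K[X]}
    (hr : aeval N r *ᵥ v = 0) : q ^ (k + 1) ∣ r := by
  classical
  have hg : aeval N (EuclideanDomain.gcd r (q ^ (k + 1))) *ᵥ v = 0 := by
    rw [EuclideanDomain.gcd_eq_gcd_ab, map_add, add_mulVec,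
      aeval_mulVec_eq_zero_of_dvd (dvd_mul_right _ _) hr,
      aeval_mulVec_eq_zero_of_dvd (dvd_mul_right _ _) hkill, add_zero]
  obtain ⟨j, hj, hgj⟩ := (dvd_prime_pow hq _).mp (EuclideanDomain.gcd_dvd_right r (q ^ (k + 1)))
  have hjk : j = k + 1 := by
    by_contra hne
    exact hv (aeval_mulVec_eq_zero_of_dvd (pow_dvd_pow q (by omega))
      (aeval_mulVec_eq_zero_of_dvd hgj.dvd hg))
  rw [hjk] at hgj
  exact hgj.symm.dvd.trans (EuclideanDomain.gcd_dvd_left r _)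

end Annihilator

theorem isUnit_krylovMatrix_of_prime_pow {K : Type*} [Field K] {d : ℕ}
    {N : Matrix (Fin d) (Fin d) K} {v : Fin d → K} {q : K[X]} (hq : Prime q) {k : ℕ}
    (hdeg : (q ^ (k + 1)).natDegree = d) (hkill : aeval N (q ^ (k + 1)) *ᵥ v = 0)
    (hv : aeval N (q ^ k) *ᵥ v ≠ 0) : IsUnit (krylovMatrix N v) := by
  refine isUnit_krylovMatrix fun r hr hrv => ?_
  by_contra hr0
  have := natDegree_le_of_dvd (pow_succ_dvd_of_aeval_mulVec_eq_zero hq hkill hv hrv) hr0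
  rw [← natDegree_lt_iff_degree_lt hr0] at hr
  omega

theorem monic_one_add_X_sq {R : Type*} [Semiring R] : (1 + X ^ 2 : R[X]).Monic := by
  monicity!

theorem natDegree_one_add_X_sq {R : Type*} [Semiring R] [Nontrivial R] :
    (1 + X ^ 2 : R[X]).natDegree = 2 := by
  compute_degree!

theorem prime_one_add_X_sq : Prime (1 + X ^ 2 : ℝ[X]) := by
  refine (irreducible_of_degree_le_three_of_not_isRoot ?_ fun x hx => ?_).prime
  · rw [natDegree_one_add_X_sq]; decide
  · simp only [IsRoot, eval_add, eval_one, eval_pow, eval_X] at hx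
    nlinarith [sq_nonneg x]

def rotationBlocks (m : ℕ) : Matrix (Fin (2 * m)) (Fin (2 * m)) ℝ :=
  of fun a b =>
    if (a : ℕ) % 2 = 0 ∧ (b : ℕ) = (a : ℕ) + 1 then 1
    else if (a : ℕ) % 2 = 1 ∧ (a : ℕ) = (b : ℕ) + 1 then -1 else 0

def shiftTwo (m : ℕ) : Matrix (Fin m) (Fin m) ℝ :=
  of fun a b => if (b : ℕ) = (a : ℕ) + 2 then 1 else 0

theorem Jblock_eq (n : ℕ) : Jblock n = rotationBlocks (n + 1) + shiftTwo (2 * (n + 1)) := by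
  ext a b
  simp only [Jblock, rotationBlocks, shiftTwo, Matrix.add_apply, of_apply]
  split_ifs <;> first | omega | norm_num

theorem rotationBlocks_apply_eq_ite {m : ℕ} (a b : Fin (2 * m)) :
    rotationBlocks m a b =
      if (b : ℕ) = (if (a : ℕ) % 2 = 0 then (a : ℕ) + 1 else (a : ℕ) - 1) then
        (if (a : ℕ) % 2 = 0 then 1 else -1) else 0 := by
  simp only [rotationBlocks, of_apply]
  split_ifs <;> first | omega | norm_num

theorem rotationBlocks_mul_self (m : ℕ) : rotationBlocks m * rotationBlocks m = -1 := by
  ext a b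
  rw [Matrix.neg_apply, one_apply, mul_apply]
  simp only [rotationBlocks_apply_eq_ite, ite_mul, zero_mul, sum_ite_val_eq, Fin.ext_iff]
  have := a.isLt
  split_ifs <;> first | omega | norm_num

theorem shiftTwo_pow (m k : ℕ) :
    shiftTwo m ^ k = of fun a b : Fin m => if (b : ℕ) = (a : ℕ) + 2 * k then 1 else 0 := by
  induction k with
  | zero => ext a b; simp [one_apply, Fin.ext_iff, eq_comm]
  | succ k ih =>
    ext a b
    rw [pow_succ, ih, mul_apply]
    simp only [of_apply, ite_mul, one_mul, zero_mul, sum_ite_val_eq, shiftTwo]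
    have := a.isLt; have := b.isLt
    split_ifs <;> first | rfl | omega

theorem rotationBlocks_commute_shiftTwo (m : ℕ) :
    Commute (rotationBlocks m) (shiftTwo (2 * m)) := by
  ext a b
  simp only [mul_apply, rotationBlocks_apply_eq_ite, shiftTwo, of_apply, ite_mul, zero_mul,
    sum_ite_val_eq]
  have := a.isLt; have := b.isLt
  split_ifs <;> first | rfl | omega | norm_num

section SquareRootOfMinusOne

variable {R : Type*} [Ring R] {J S M N : R}

theorem isUnit_of_mul_self_eq_neg_one (hJ : J * J = -1) : IsUnit J :=
  ⟨⟨J, -J, by rw [mul_neg, hJ, neg_neg], by rw [neg_mul, hJ, neg_neg]⟩, rfl⟩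

theorem isUnit_add_of_mul_self_eq_neg_one (hJ : J * J = -1) (hJS : Commute J S)
    (hS : IsNilpotent S) : IsUnit (J + S) :=
  hS.isUnit_add_left_of_commute (isUnit_of_mul_self_eq_neg_one hJ) hJS.symm

theorem one_add_sq_add_eq_mul (hJ : J * J = -1) (hJS : Commute J S) :
    1 + (J + S) ^ 2 = (2 * J + S) * S := by
  rw [sq, add_mul, mul_add, mul_add, hJ, ← hJS.eq, add_mul, two_mul, add_mul]
  abel

theorem one_add_sq_pow_eq_of_mul_eq_neg_one (hMN : M * N = -1) (hNM : N * M = -1) (k : ℕ) :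
    (1 + N ^ 2) ^ k = (N ^ 2) ^ k * (1 + M ^ 2) ^ k := by
  have hNM_comm : Commute N M := hNM.trans hMN.symm
  have h : 1 + N ^ 2 = N ^ 2 * (1 + M ^ 2) := by
    have : N ^ 2 * M ^ 2 = 1 := by
      rw [← hNM_comm.mul_pow, hNM]
      norm_num
    rw [mul_add, mul_one, this, add_comm]
  rw [h, ((Commute.one_right _).add_right (hNM_comm.pow_pow 2 2)).mul_pow]

theorem exists_isUnit_one_add_sq_pow_eq (h2 : IsUnit (2 : R)) (hJ : J * J = -1)
    (hJS : Commute J S) (hS : IsNilpotent S) (hMN : (J + S) * N = -1)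
    (hNM : N * (J + S) = -1) (k : ℕ) :
    ∃ U : R, IsUnit U ∧ (1 + N ^ 2) ^ k = U * S ^ k := by
  have hN : IsUnit N := ⟨⟨N, -(J + S), by rw [mul_neg, hNM, neg_neg],
    by rw [neg_mul, hMN, neg_neg]⟩, rfl⟩
  have hJ2 : IsUnit (2 * J + S) := hS.isUnit_add_left_of_commute
    (h2.mul (isUnit_of_mul_self_eq_neg_one hJ)) ((Commute.ofNat_right S 2).mul_right hJS.symm)
  have hS_comm : Commute (2 * J + S) S :=
    (((Commute.ofNat_right S 2).mul_right hJS.symm).add_right (Commute.refl S)).symm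
  refine ⟨(N ^ 2) ^ k * (2 * J + S) ^ k, ((hN.pow 2).pow k).mul (hJ2.pow k), ?_⟩
  rw [one_add_sq_pow_eq_of_mul_eq_neg_one hMN hNM, one_add_sq_add_eq_mul hJ hJS,
    hS_comm.mul_pow, mul_assoc]

end SquareRootOfMinusOne

section JordanBlock

variable (n : ℕ)

theorem shiftTwo_pow_eq_zero : shiftTwo (2 * (n + 1)) ^ (n + 1) = 0 := by
  ext a b
  rw [shiftTwo_pow, of_apply, if_neg (by omega), Matrix.zero_apply]

theorem shiftTwo_transpose_pow_mulVec_single_ne_zero :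
    (shiftTwo (2 * (n + 1)))ᵀ ^ n *ᵥ Pi.single 0 1 ≠ 0 := by
  intro h
  have := congrFun h ⟨2 * n, by omega⟩
  simp [← transpose_pow, shiftTwo_pow] at this

theorem exists_isUnit_one_add_sq_pow_eq_Jblock (k : ℕ) :
    ∃ U, IsUnit U ∧
      (1 + (-((Jblock n)⁻¹)ᵀ) ^ 2) ^ k = U * (shiftTwo (2 * (n + 1)))ᵀ ^ k := by
  have hJ : (rotationBlocks (n + 1))ᵀ * (rotationBlocks (n + 1))ᵀ = -1 := by
    rw [← transpose_mul, rotationBlocks_mul_self, transpose_neg, transpose_one]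
  have hJS : Commute (rotationBlocks (n + 1))ᵀ (shiftTwo (2 * (n + 1)))ᵀ := by
    simp only [Commute, SemiconjBy, ← transpose_mul, (rotationBlocks_commute_shiftTwo _).eq]
  have hS : IsNilpotent (shiftTwo (2 * (n + 1)))ᵀ :=
    ⟨n + 1, by rw [← transpose_pow, shiftTwo_pow_eq_zero, transpose_zero]⟩
  have hM : (Jblock n)ᵀ = (rotationBlocks (n + 1))ᵀ + (shiftTwo (2 * (n + 1)))ᵀ := by
    rw [Jblock_eq, transpose_add]
  have hdet : IsUnit (Jblock n)ᵀ.det := (isUnit_iff_isUnit_det _).mp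
    (hM ▸ isUnit_add_of_mul_self_eq_neg_one hJ hJS hS)
  have h2 : IsUnit (2 : Matrix (Fin (2 * (n + 1))) (Fin (2 * (n + 1))) ℝ) := by
    simpa only [map_ofNat] using
      (IsUnit.mk0 (2 : ℝ) two_ne_zero).map (algebraMap ℝ (Matrix _ _ ℝ))
  rw [transpose_nonsing_inv]
  exact exists_isUnit_one_add_sq_pow_eq h2 hJ hJS hS
    (by rw [← hM, mul_neg, mul_nonsing_inv _ hdet])
    (by rw [← hM, neg_mul, nonsing_inv_mul _ hdet]) k

theorem one_add_sq_pow_succ_eq_zero_of_Jblock :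
    (1 + (-((Jblock n)⁻¹)ᵀ) ^ 2) ^ (n + 1) = 0 := by
  obtain ⟨U, -, hU⟩ := exists_isUnit_one_add_sq_pow_eq_Jblock n (n + 1)
  rw [hU, ← transpose_pow, shiftTwo_pow_eq_zero, transpose_zero, mul_zero]

theorem one_add_sq_pow_mulVec_single_ne_zero_of_Jblock :
    (1 + (-((Jblock n)⁻¹)ᵀ) ^ 2) ^ n *ᵥ Pi.single 0 1 ≠ 0 := by
  obtain ⟨U, hU, hpow⟩ := exists_isUnit_one_add_sq_pow_eq_Jblock n n
  rw [hpow, ← mulVec_mulVec]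
  intro h
  exact shiftTwo_transpose_pow_mulVec_single_ne_zero n
    (mulVec_injective_iff_isUnit.mpr hU (h.trans (mulVec_zero U).symm))

end JordanBlock

/-- For `M` the single real Jordan block with eigenvalues `±i`, `N = −(M⁻¹)ᵀ`,
`C` the companion matrix of `(1+μ²)^{n+1}`, and `B` the matrix with columns
`e_1, N e_1, …, N^{2n+1} e_1`: `B` is invertible and `N·B = B·C`. -/
theorem stmt_11 (n : ℕ)
    (N : Matrix (Fin (2 * (n + 1))) (Fin (2 * (n + 1))) ℝ)
    (hN : N = -(Matrix.transpose (Jblock n)⁻¹))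
    (Cmat : Matrix (Fin (2 * (n + 1))) (Fin (2 * (n + 1))) ℝ)
    (hC : Cmat = Matrix.of fun i j : Fin (2 * (n + 1)) =>
      if (j : ℕ) = 2 * n + 1 then -(((1 + X ^ 2 : Polynomial ℝ) ^ (n + 1)).coeff (i : ℕ))
      else if (i : ℕ) = (j : ℕ) + 1 then 1 else 0)
    (B : Matrix (Fin (2 * (n + 1))) (Fin (2 * (n + 1))) ℝ)
    (hB : B = Matrix.of fun i j : Fin (2 * (n + 1)) =>
      (N ^ (j : ℕ)).mulVec (Pi.single (0 : Fin (2 * (n + 1))) 1) i) :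
    IsUnit B ∧ N * B = B * Cmat := by
  have hCmat : Cmat = companionMatrix (2 * (n + 1)) ((1 + X ^ 2 : ℝ[X]) ^ (n + 1)) := by
    ext i j
    have hlast : (j : ℕ) = 2 * n + 1 ↔ (j : ℕ) + 1 = 2 * (n + 1) := by omega
    simp only [hC, companionMatrix, of_apply, hlast]
  have hBkrylov : B = krylovMatrix N (Pi.single 0 1) := hB
  have hmonic : ((1 + X ^ 2 : ℝ[X]) ^ (n + 1)).Monic := monic_one_add_X_sq.pow _
  have hdeg : ((1 + X ^ 2 : ℝ[X]) ^ (n + 1)).natDegree = 2 * (n + 1) := by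
    rw [monic_one_add_X_sq.natDegree_pow, natDegree_one_add_X_sq, mul_comm]
  have haeval : ∀ k, aeval N ((1 + X ^ 2 : ℝ[X]) ^ k) = (1 + N ^ 2) ^ k := by simp
  have hkill : aeval N ((1 + X ^ 2 : ℝ[X]) ^ (n + 1)) *ᵥ Pi.single 0 1 = 0 := by
    rw [haeval, hN, one_add_sq_pow_succ_eq_zero_of_Jblock, zero_mulVec]
  have hv : aeval N ((1 + X ^ 2 : ℝ[X]) ^ n) *ᵥ Pi.single 0 1 ≠ 0 := by
    rw [haeval, hN]
    exact one_add_sq_pow_mulVec_single_ne_zero_of_Jblock n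
  rw [hBkrylov, hCmat]
  exact ⟨isUnit_krylovMatrix_of_prime_pow prime_one_add_X_sq hdeg hkill hv,
    mul_krylovMatrix_eq_krylovMatrix_mul_companionMatrix hmonic hdeg hkill⟩
end

section
/- Let n ≥ 0, Λ = [[0,1],[−1,0]], let M be the single real Jordan block of size 2(n+1) with eigenvalues ±i (2×2 blocks Λ on the block diagonal, the 2×2 identity on the block superdiagonal, zero blocks elsewhere), and let N = −(M^{−1})^T. Regard matrices of size 2(n+1) as (n+1)×(n+1) arrays of 2×2 blocks. Then for every a ≥ 1 and all block indices 1 ≤ i, j ≤ n+1, the 2×2 block of N^a in block position (i,j) equals C(a−1+i−j, i−j)·(−Λ)^{a+i−j} if i ≥ j, and equals the zero block if i < j. In particular (taking a = 1), the (i,j) block of N itself equals (−Λ)^{1+i−j} for i ≥ j and 0 for i < j. -/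
open Finset Matrix
open scoped Kronecker

section TruncatedNegativeBinomial

variable {R : Type*} [Ring R]

-- `(1 - Z)^-(d+2) * (1 - Z) = (1 - Z)^-(d+1)`, truncated below degree `m` with the error term kept.
theorem sum_choose_succ_mul_one_sub_add (Z : R) (d m : ℕ) :
    (∑ k ∈ range m, (d + 1 + k).choose k • Z ^ k) * (1 - Z) + (d + 1 + m).choose m • Z ^ m =
      ∑ k ∈ range (m + 1), (d + k).choose k • Z ^ k := by
  induction m with
  | zero => simp
  | succ m ih =>
    have pascal : (d + 1 + (m + 1)).choose (m + 1) =
        (d + 1 + m).choose m + (d + (m + 1)).choose (m + 1) := by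
      rw [show d + 1 + (m + 1) = d + 1 + m + 1 by omega, Nat.choose_succ_succ,
        show d + 1 + m = d + (m + 1) by omega]
    rw [sum_range_succ, sum_range_succ _ (m + 1), ← ih, pascal, add_smul, add_mul, pow_succ]
    simp only [smul_mul_assoc, mul_sub, mul_one]
    abel

theorem geom_sum_pow_of_pow_eq_zero {Z : R} {m : ℕ} (hZ : Z ^ m = 0) (d : ℕ) :
    (∑ k ∈ range m, Z ^ k) ^ (d + 1) = ∑ k ∈ range m, (d + k).choose k • Z ^ k := by
  induction d with
  | zero => simp
  | succ d ih =>
    have hinv : (1 - Z) * ∑ k ∈ range m, Z ^ k = 1 := by rw [mul_neg_geom_sum, hZ, sub_zero]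
    have hstep := sum_choose_succ_mul_one_sub_add Z d m
    rw [hZ, smul_zero, add_zero, sum_range_succ, hZ, smul_zero, add_zero] at hstep
    rw [pow_succ, ih, ← hstep, mul_assoc, hinv, mul_one]

theorem geom_sum_mul_mul_sub_eq_one {P X Y : R} {m : ℕ} (hPX : P * X = 1)
    (hPY : (P * Y) ^ m = 0) : (∑ k ∈ range m, (P * Y) ^ k) * P * (X - Y) = 1 := by
  rw [mul_assoc, mul_sub, hPX, geom_sum_mul_neg, hPY, sub_zero]

theorem geom_sum_mul_pow {P Y : R} {m : ℕ} (hPY : Commute P Y) (hY : Y ^ m = 0) (d : ℕ) :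
    ((∑ k ∈ range m, (P * Y) ^ k) * P) ^ (d + 1) =
      ∑ k ∈ range m, (d + k).choose k • (P ^ (d + 1 + k) * Y ^ k) := by
  have hcomm : Commute (∑ k ∈ range m, (P * Y) ^ k) P :=
    Commute.sum_left _ _ _ fun k _ => ((Commute.refl P).mul_left hPY.symm).pow_left k
  rw [hcomm.mul_pow, geom_sum_pow_of_pow_eq_zero (by rw [hPY.mul_pow, hY, mul_zero]), sum_mul]
  refine sum_congr rfl fun k _ => ?_
  rw [smul_mul_assoc, hPY.mul_pow, mul_assoc, ← (hPY.pow_pow (d + 1) k).eq, ← mul_assoc,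
    ← pow_add, add_comm k]

end TruncatedNegativeBinomial

theorem kronecker_pow {l n α : Type*} [Fintype l] [DecidableEq l] [Fintype n] [DecidableEq n]
    [CommSemiring α] (A : Matrix l l α) (B : Matrix n n α) (k : ℕ) :
    (A ⊗ₖ B) ^ k = (A ^ k) ⊗ₖ (B ^ k) := by
  induction k with
  | zero => simp
  | succ k ih => rw [pow_succ, ih, ← mul_kronecker_mul, pow_succ, pow_succ]

def lowerShift (n : ℕ) (α : Type*) [Zero α] [One α] : Matrix (Fin n) (Fin n) α :=
  of fun i j => if (i : ℕ) = j + 1 then 1 else 0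

theorem lowerShift_pow_apply {n : ℕ} {α : Type*} [Semiring α] (k : ℕ) (i j : Fin n) :
    (lowerShift n α ^ k) i j = if (i : ℕ) = j + k then 1 else 0 := by
  induction k generalizing i with
  | zero => simp [one_apply, Fin.ext_iff]
  | succ k ih =>
    rw [pow_succ', mul_apply]
    simp only [ih]
    simp only [lowerShift, of_apply, ite_mul, one_mul, zero_mul, ← ite_and]
    split_ifs with h
    · rw [Fintype.sum_eq_single ⟨j + k, by omega⟩ fun x hx => if_neg ?_]
      · exact if_pos ⟨by omega, rfl⟩
      · contrapose! hx; ext; exact hx.2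
    · exact sum_eq_zero fun x _ => if_neg (by omega)

theorem lowerShift_pow_self (n : ℕ) (α : Type*) [Semiring α] : lowerShift n α ^ n = 0 := by
  ext i j
  rw [lowerShift_pow_apply, if_neg (by omega), Matrix.zero_apply]

theorem sum_lowerShift_pow_kronecker_apply {m : ℕ} {ι α : Type*} [Semiring α]
    (f : ℕ → Matrix ι ι α) (p q : Fin m) (u v : ι) :
    (∑ k ∈ range m, (lowerShift m α ^ k) ⊗ₖ f k) (p, u) (q, v) =
      if (q : ℕ) ≤ p then f (p - q) u v else 0 := by
  simp only [Matrix.sum_apply, kronecker_apply, lowerShift_pow_apply, ite_mul, one_mul, zero_mul]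
  rw [sum_eq_single (p - q : ℕ) (fun k _ hk => if_neg (by omega)) (fun h => by simp at h; omega)]
  split_ifs <;> first | rfl | omega

def blockEquiv (n : ℕ) : Fin n × Fin 2 ≃ Fin (2 * n) :=
  finProdFinEquiv.trans (finCongr (Nat.mul_comm n 2))

theorem blockEquiv_apply {n : ℕ} (p : Fin n) (u : Fin 2) :
    blockEquiv n (p, u) = ⟨2 * p + u, by omega⟩ :=
  Fin.ext (Nat.add_comm _ _)

section RealJordanBlock

local notation "Λ" => !![(0 : ℝ), 1; -1, 0]

theorem Jblock_eq_reindex (n : ℕ) :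
    Jblock n = reindexAlgEquiv ℝ ℝ (blockEquiv (n + 1))
      (1 ⊗ₖ Λ + (lowerShift (n + 1) ℝ)ᵀ ⊗ₖ 1) := by
  ext i j
  obtain ⟨⟨p, u⟩, rfl⟩ := (blockEquiv (n + 1)).surjective i
  obtain ⟨⟨q, v⟩, rfl⟩ := (blockEquiv (n + 1)).surjective j
  rw [coe_reindexAlgEquiv, reindex_apply, submatrix_apply, Equiv.symm_apply_apply,
    Equiv.symm_apply_apply, blockEquiv_apply, blockEquiv_apply]
  simp only [Jblock, lowerShift, of_apply, Nat.mul_add_mod_self_left, Matrix.add_apply,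
    kroneckerMap_apply, one_apply, transpose_apply, Fin.ext_iff, ite_mul, mul_ite, one_mul,
    mul_one, zero_mul, mul_zero]
  fin_cases u <;> fin_cases v <;> simp <;> split_ifs <;> first | rfl | omega

theorem neg_transpose_inv_Jblock_pow (n d : ℕ) :
    (-((Jblock n)⁻¹)ᵀ) ^ (d + 1) = reindex (blockEquiv (n + 1)) (blockEquiv (n + 1))
      (∑ k ∈ range (n + 1),
        (lowerShift (n + 1) ℝ ^ k) ⊗ₖ (((d + k).choose k : ℝ) • (-Λ) ^ (d + 1 + k))) := by
  set φ := reindexAlgEquiv ℝ ℝ (blockEquiv (n + 1))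
  set X : Matrix _ _ ℝ := (1 : Matrix (Fin (n + 1)) (Fin (n + 1)) ℝ) ⊗ₖ Λ
  set P : Matrix _ _ ℝ := (1 : Matrix (Fin (n + 1)) (Fin (n + 1)) ℝ) ⊗ₖ (-Λ)
  set Y : Matrix _ _ ℝ := lowerShift (n + 1) ℝ ⊗ₖ (1 : Matrix (Fin 2) (Fin 2) ℝ)
  have hΛ : -Λ * Λ = 1 := by ext i j; fin_cases i <;> fin_cases j <;> simp
  have hΛT : Λᵀ = -Λ := by ext i j; fin_cases i <;> fin_cases j <;> simp
  have hPX : P * X = 1 := by rw [← mul_kronecker_mul, one_mul, hΛ, one_kronecker_one]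
  have hPY : Commute P Y := by
    rw [Commute, SemiconjBy, ← mul_kronecker_mul, ← mul_kronecker_mul]
    simp
  have hY : Y ^ (n + 1) = 0 := by rw [kronecker_pow, lowerShift_pow_self, zero_kronecker]
  have hT : (Jblock n)ᵀ = φ (-(X - Y)) := by
    have hAT : (X + (lowerShift (n + 1) ℝ)ᵀ ⊗ₖ 1)ᵀ = -(X - Y) := by
      rw [transpose_add, ← kroneckerMap_transpose, ← kroneckerMap_transpose, transpose_one,
        transpose_one, transpose_transpose, hΛT, ← neg_one_smul ℝ Λ, kronecker_smul, neg_one_smul]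
      abel
    rw [Jblock_eq_reindex, ← hAT]
    rfl
  have hinv : -((Jblock n)⁻¹)ᵀ = φ ((∑ k ∈ range (n + 1), (P * Y) ^ k) * P) := by
    rw [transpose_nonsing_inv, neg_eq_iff_eq_neg, ← map_neg]
    refine inv_eq_left_inv ?_
    rw [hT, ← map_mul, neg_mul_neg,
      geom_sum_mul_mul_sub_eq_one hPX (by rw [hPY.mul_pow, hY, mul_zero]), map_one]
  rw [hinv, ← map_pow, geom_sum_mul_pow hPY hY d]
  refine congrArg (reindex _ _) (sum_congr rfl fun k _ => ?_)
  rw [kronecker_smul, Nat.cast_smul_eq_nsmul, kronecker_pow, kronecker_pow, ← mul_kronecker_mul,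
    one_pow, one_pow, one_mul, mul_one]

theorem neg_transpose_inv_Jblock_pow_apply (n a : ℕ) (ha : 1 ≤ a) (p q : Fin (n + 1))
    (u v : Fin 2) :
    ((-((Jblock n)⁻¹)ᵀ) ^ a) (blockEquiv (n + 1) (p, u)) (blockEquiv (n + 1) (q, v)) =
      if (q : ℕ) ≤ p then
        (((a - 1 + (p - q : ℕ)).choose (p - q : ℕ) : ℝ) • (-Λ) ^ (a + (p - q : ℕ))) u v
      else 0 := by
  obtain ⟨d, rfl⟩ := Nat.exists_eq_add_of_le' ha
  rw [neg_transpose_inv_Jblock_pow, reindex_apply, submatrix_apply, Equiv.symm_apply_apply,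
    Equiv.symm_apply_apply, sum_lowerShift_pow_kronecker_apply, Nat.add_sub_cancel]

end RealJordanBlock

/-- For `N = −(M⁻¹)ᵀ`, `M` the single real Jordan block of size `2(n+1)` with
eigenvalues `±i`: for `a ≥ 1` the 2×2 block of `N^a` at block position `(p, q)`
(0-based) equals `C(a−1+p−q, p−q)·(−Λ)^{a+p−q}` for `p ≥ q` and `0` for `p < q`;
in particular the `(p,q)` block of `N` is `(−Λ)^{1+p−q}` for `p ≥ q` and `0` else. -/
theorem stmt_12 (n : ℕ)
    (N : Matrix (Fin (2 * (n + 1))) (Fin (2 * (n + 1))) ℝ)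
    (hN : N = -(Matrix.transpose (Jblock n)⁻¹))
    (Λ : Matrix (Fin 2) (Fin 2) ℝ) (hΛ : Λ = !![(0 : ℝ), 1; -1, 0]) :
    (∀ a : ℕ, 1 ≤ a → ∀ p q : Fin (n + 1), ∀ u v : Fin 2,
      (N ^ a) ⟨2 * (p : ℕ) + (u : ℕ), by have := p.2; have := u.2; omega⟩
              ⟨2 * (q : ℕ) + (v : ℕ), by have := q.2; have := v.2; omega⟩
        = if (q : ℕ) ≤ (p : ℕ)
            then (((a - 1 + ((p : ℕ) - (q : ℕ))).choose ((p : ℕ) - (q : ℕ)) : ℝ) •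
              ((-Λ) ^ (a + ((p : ℕ) - (q : ℕ))))) u v
            else 0) ∧
    (∀ p q : Fin (n + 1), ∀ u v : Fin 2,
      N ⟨2 * (p : ℕ) + (u : ℕ), by have := p.2; have := u.2; omega⟩
        ⟨2 * (q : ℕ) + (v : ℕ), by have := q.2; have := v.2; omega⟩
        = if (q : ℕ) ≤ (p : ℕ) then ((-Λ) ^ (1 + ((p : ℕ) - (q : ℕ)))) u v else 0) := by
  subst hN hΛ
  have h := neg_transpose_inv_Jblock_pow_apply n
  simp only [blockEquiv_apply] at h
  exact ⟨h, fun p q u v => by simpa using h 1 le_rfl p q u v⟩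
end

section
/- Let n ≥ 0 be even. Let Λ = [[0,1],[−1,0]], let M be the single real Jordan block of size 2(n+1) with eigenvalues ±i (2×2 blocks Λ on the block diagonal, the 2×2 identity on the block superdiagonal, zero blocks elsewhere), let N = −(M^{−1})^T, and let B be the real matrix whose j-th column is N^{j−1}e_1 (j = 1, …, 2n+2). Write points of ℝ^{2(n+1)} as (x_0, y_0, …, x_n, y_n) and set z_k = x_k + i·y_k. Define F : ℝ^{2(n+1)} → ℂ by F(x) = (n!/2^n)·( 2^n·z_n − Σ_{l=1}^n 2^{n−l}·(−i)^l·conj(z_{n−l}) ). For 0 ≤ j ≤ 2n+1 set d_j = (n!/2^n)·Σ_{i=0}^n 2^i·C(i+j−1, i) and b_j = 2·n!·C(n+j−1, n) − d_j, with the convention C(−1,0) = 1. Then for every x ∈ ℝ^{2(n+1)}, writing s = B^{−1}x with components s_0, …, s_{2n+1}: Re F(x) = Σ_{r=0}^n (−1)^{n/2+r}·b_{2r}·s_{2r} and Im F(x) = Σ_{r=0}^n (−1)^{n/2+r}·d_{2r+1}·s_{2r+1}. -/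
/-
Identify `ℝ^{2(n+1)}` with `ℂ^{n+1}` through `z_p = x_p + i y_p`. In these coordinates `Mᵀ` acts
as multiplication by `i` plus the shift `z_p ↦ z_{p-1}`, that is, as multiplication by `X + i` on
`ℂ[X]/(X^{n+1})`, with `e_0` corresponding to `1`. Since `N = (-Mᵀ)⁻¹`, the `j`-th column
`N^j e_0` of `B` has coordinates `z_p = i^{j+p} C(j+p-1, p)`.

A real relation `∑ s_j N^j e_0 = 0`, multiplied by `(Mᵀ)^{2n+1}`, becomes `Q(Mᵀ) e_0 = 0` for a
real polynomial `Q` of degree `< 2n+2`. Then `X^{n+1}` divides `Q(X + i)`, so `(X - i)^{n+1}`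
divides `Q`, and so does its conjugate `(X + i)^{n+1}`; hence `Q = 0` and `B` is invertible.

Finally `F` is `ℝ`-linear, so `F x = ∑ s_j F(N^j e_0)` with `s = B⁻¹x`, and `F(N^j e_0)` is read off
from the coordinates of the columns: for even `n` it is `(-1)^{n/2+r} b_{2r}` when `j = 2r` and
`(-1)^{n/2+r} d_{2r+1} i` when `j = 2r + 1`.
-/

open Complex

/-- `zc n k x = x_k + i y_k`, for points of `ℝ^{2(n+1)}` written `(x_0, y_0, …, x_n, y_n)`
(and `0` for `k > n`). -/
noncomputable def zc (n k : ℕ) (x : Fin (2 * (n + 1)) → ℝ) : ℂ :=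
  if h : k ≤ n then
    (x ⟨2 * k, by omega⟩ : ℂ) + Complex.I * (x ⟨2 * k + 1, by omega⟩ : ℂ)
  else 0

open Polynomial Matrix

lemma Polynomial.X_sub_C_pow_dvd_of_X_pow_dvd_taylor {R : Type*} [CommRing R] {f : R[X]} {r : R}
    {k : ℕ} (h : X ^ k ∣ taylor r f) : (X - C r) ^ k ∣ f := by
  obtain ⟨g, hg⟩ := h
  refine ⟨taylor (-r) g, ?_⟩
  calc f = taylor (-r) (taylor r f) := by rw [taylor_taylor, neg_add_cancel, taylor_zero]
    _ = (X - C r) ^ k * taylor (-r) g := by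
      rw [hg, taylor_mul, taylor_X_pow, C_neg, ← sub_eq_add_neg]

lemma Polynomial.eq_zero_of_X_sub_C_I_pow_dvd_map {Q : ℝ[X]} {k : ℕ} (hQ : Q.natDegree < 2 * k)
    (h : (X - C I) ^ k ∣ Q.map (algebraMap ℝ ℂ)) : Q = 0 := by
  set Qc := Q.map (algebraMap ℝ ℂ)
  have hconj : Qc.map (starRingEnd ℂ) = Qc := by
    rw [map_map]
    congr 1
    exact RingHom.ext conj_ofReal
  have h' : (X - C (-I)) ^ k ∣ Qc := by
    simpa [hconj, Polynomial.map_sub] using Polynomial.map_dvd (starRingEnd ℂ) h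
  have hcop : IsCoprime (X - C I) (X - C (-I)) :=
    isCoprime_X_sub_C_of_isUnit_sub (by simp [sub_neg_eq_add, ← two_mul, I_ne_zero])
  have hdvd := (hcop.pow (m := k) (n := k)).mul_dvd h h'
  have hQc : Qc = 0 := by
    refine eq_zero_of_dvd_of_natDegree_lt hdvd ?_
    rw [natDegree_mul (pow_ne_zero _ (X_sub_C_ne_zero _)) (pow_ne_zero _ (X_sub_C_ne_zero _)),
      natDegree_pow, natDegree_pow, natDegree_X_sub_C, natDegree_X_sub_C, natDegree_map]
    omega
  exact (Polynomial.map_eq_zero _).mp hQc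

namespace Jblock

variable {n : ℕ}

noncomputable def zcₗ (n p : ℕ) : (Fin (2 * (n + 1)) → ℝ) →ₗ[ℝ] ℂ where
  toFun := zc n p
  map_add' v w := by unfold zc; split_ifs <;> push_cast [Pi.add_apply] <;> ring
  map_smul' c v := by
    unfold zc
    split_ifs <;> simp only [Pi.smul_apply, smul_eq_mul, ofReal_mul, RingHom.id_apply, real_smul,
      mul_zero]
    ring

@[simp] lemma zcₗ_apply (p : ℕ) (v : Fin (2 * (n + 1)) → ℝ) : zcₗ n p v = zc n p v := rfl

lemma zc_of_le {p : ℕ} (hp : p ≤ n) (v : Fin (2 * (n + 1)) → ℝ) :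
    zc n p v = v ⟨2 * p, by omega⟩ + I * v ⟨2 * p + 1, by omega⟩ := dif_pos hp

lemma ext_zc {v w : Fin (2 * (n + 1)) → ℝ} (h : ∀ p ≤ n, zc n p v = zc n p w) : v = w := by
  funext a
  have ha := h (a / 2) (by omega)
  rw [zc_of_le (by omega), zc_of_le (by omega), Complex.ext_iff] at ha
  simp only [add_re, ofReal_re, mul_re, I_re, ofReal_im, I_im, add_im, mul_im] at ha
  rcases Nat.mod_two_eq_zero_or_one a with h0 | h1
  · have : a = ⟨2 * (a / 2), by omega⟩ := Fin.ext (by simp only; omega)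
    rw [this]; simpa using ha.1
  · have : a = ⟨2 * (a / 2) + 1, by omega⟩ := Fin.ext (by simp only; omega)
    rw [this]; simpa using ha.2

noncomputable def ofCoords (n : ℕ) (f : ℕ → ℂ) : Fin (2 * (n + 1)) → ℝ :=
  fun a => if (a : ℕ) % 2 = 0 then (f (a / 2)).re else (f (a / 2)).im

lemma zc_ofCoords {p : ℕ} (hp : p ≤ n) (f : ℕ → ℂ) : zc n p (ofCoords n f) = f p := by
  rw [zc_of_le hp]
  have h1 : (2 * p + 1) / 2 = p := by omega
  simp [ofCoords, Complex.ext_iff, h1]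

lemma zc_transpose_mulVec_zero (w : Fin (2 * (n + 1)) → ℝ) :
    zc n 0 ((Jblock n)ᵀ *ᵥ w) = I * zc n 0 w := by
  have key : (zcₗ n 0).comp (Jblock n)ᵀ.mulVecLin = I • zcₗ n 0 := by
    refine LinearMap.pi_ext fun i x => ?_
    simp only [LinearMap.comp_apply, Matrix.mulVecLin_apply, Matrix.mulVec_single,
      LinearMap.smul_apply, zcₗ_apply, zc_of_le (Nat.zero_le n)]
    simp only [Pi.smul_apply, Matrix.col_apply, Matrix.transpose_apply, Jblock, Matrix.of_apply,
      Pi.single_apply, Fin.ext_iff, MulOpposite.smul_eq_mul_unop, MulOpposite.unop_op]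
    split_ifs <;> first | omega | (simp [← mul_assoc]; done) | (exfalso; tauto)
  exact LinearMap.congr_fun key w

lemma zc_transpose_mulVec_succ (w : Fin (2 * (n + 1)) → ℝ) {p : ℕ} (hp : p < n) :
    zc n (p + 1) ((Jblock n)ᵀ *ᵥ w) = I * zc n (p + 1) w + zc n p w := by
  have key : (zcₗ n (p + 1)).comp (Jblock n)ᵀ.mulVecLin = I • zcₗ n (p + 1) + zcₗ n p := by
    refine LinearMap.pi_ext fun i x => ?_
    simp only [LinearMap.comp_apply, Matrix.mulVecLin_apply, Matrix.mulVec_single,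
      LinearMap.add_apply, LinearMap.smul_apply, zcₗ_apply, zc_of_le hp, zc_of_le hp.le]
    simp only [Pi.smul_apply, Matrix.col_apply, Matrix.transpose_apply, Jblock, Matrix.of_apply,
      Pi.single_apply, Fin.ext_iff, MulOpposite.smul_eq_mul_unop, MulOpposite.unop_op]
    split_ifs <;> first | omega | simp [← mul_assoc]
  exact LinearMap.congr_fun key w

lemma zc_neg (p : ℕ) (v : Fin (2 * (n + 1)) → ℝ) : zc n p (-v) = -zc n p v :=
  (zcₗ n p).map_neg v

lemma zc_zero (p : ℕ) : zc n p (0 : Fin (2 * (n + 1)) → ℝ) = 0 := (zcₗ n p).map_zero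

lemma eq_zero_of_transpose_mulVec_eq_zero {w : Fin (2 * (n + 1)) → ℝ}
    (hw : (Jblock n)ᵀ *ᵥ w = 0) : w = 0 := by
  have hz : ∀ p ≤ n, zc n p w = 0 := by
    intro p
    induction p with
    | zero =>
      intro _
      have := zc_transpose_mulVec_zero w
      rw [hw, zc_zero] at this
      simpa using this.symm
    | succ p ih =>
      intro hp
      have := zc_transpose_mulVec_succ w hp
      rw [hw, zc_zero, ih (by omega)] at this
      simpa using this.symm
  exact ext_zc fun p hp => by rw [hz p hp, zc_zero]

lemma isUnit_det_transpose : IsUnit (Jblock n)ᵀ.det := by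
  rw [isUnit_iff_ne_zero, Ne, ← Matrix.exists_mulVec_eq_zero_iff]
  rintro ⟨w, hw0, hw⟩
  exact hw0 (eq_zero_of_transpose_mulVec_eq_zero hw)

/-- The column `N^j e_0` of `B`. At `j = 0` truncated subtraction turns `C(p - 1, p)` into `1` for
`p = 0` and `0` otherwise, as in the convention `C(-1, 0) = 1`. -/
noncomputable def krylovVec (n j : ℕ) : Fin (2 * (n + 1)) → ℝ :=
  ofCoords n fun p => I ^ (j + p) * ((j + p - 1).choose p : ℂ)

lemma zc_krylovVec {p : ℕ} (hp : p ≤ n) (j : ℕ) :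
    zc n p (krylovVec n j) = I ^ (j + p) * ((j + p - 1).choose p : ℂ) :=
  zc_ofCoords hp _

lemma krylovVec_zero : krylovVec n 0 = Pi.single 0 1 := by
  refine ext_zc fun p hp => ?_
  rw [zc_krylovVec hp, zc_of_le hp]
  rcases p with _ | p
  · simp
  · simp [Fin.ext_iff]

lemma transpose_mulVec_krylovVec_succ (j : ℕ) :
    (Jblock n)ᵀ *ᵥ krylovVec n (j + 1) = -krylovVec n j := by
  refine ext_zc fun p hp => ?_
  rw [zc_neg]
  rcases p with _ | p
  · rw [zc_transpose_mulVec_zero, zc_krylovVec hp, zc_krylovVec hp]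
    simp only [Nat.choose_zero_right, Nat.cast_one, mul_one]
    linear_combination I ^ j * I_sq
  · rw [zc_transpose_mulVec_succ _ hp, zc_krylovVec hp, zc_krylovVec hp,
      zc_krylovVec (by omega), show j + 1 + (p + 1) - 1 = j + p + 1 by omega,
      show j + (p + 1) - 1 = j + p by omega, show j + 1 + p - 1 = j + p by omega,
      Nat.choose_succ_succ, Nat.cast_add]
    linear_combination I ^ (j + p + 1) * ((j + p).choose p + (j + p).choose (p + 1) : ℂ) * I_sq

lemma neg_inv_transpose_mulVec_krylovVec (j : ℕ) :
    -((Jblock n)⁻¹)ᵀ *ᵥ krylovVec n j = krylovVec n (j + 1) := by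
  rw [transpose_nonsing_inv, ← neg_neg (krylovVec n j), ← transpose_mulVec_krylovVec_succ,
    neg_mulVec, mulVec_neg, neg_neg, mulVec_mulVec, nonsing_inv_mul _ isUnit_det_transpose,
    one_mulVec]

lemma neg_inv_transpose_pow_mulVec_single (j : ℕ) :
    (-((Jblock n)⁻¹)ᵀ) ^ j *ᵥ Pi.single 0 1 = krylovVec n j := by
  induction j with
  | zero => rw [pow_zero, one_mulVec, krylovVec_zero]
  | succ j ih => rw [pow_succ', ← mulVec_mulVec, ih, neg_inv_transpose_mulVec_krylovVec]

lemma zc_transpose_pow_mulVec_single (k : ℕ) {p : ℕ} (hp : p ≤ n) :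
    zc n p (((Jblock n)ᵀ) ^ k *ᵥ Pi.single 0 1) = ((X + C I) ^ k).coeff p := by
  induction k generalizing p with
  | zero =>
    rw [pow_zero, one_mulVec, zc_of_le hp, pow_zero, coeff_one]
    rcases p with _ | p
    · simp
    · simp [Fin.ext_iff]
  | succ k ih =>
    rw [pow_succ', ← mulVec_mulVec, pow_succ', add_mul, coeff_add, coeff_C_mul]
    rcases p with _ | p
    · rw [zc_transpose_mulVec_zero, ih hp, coeff_X_mul_zero, zero_add]
    · rw [zc_transpose_mulVec_succ _ hp, ih hp, ih (by omega), coeff_X_mul, add_comm]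

lemma zc_aeval_transpose_mulVec_single (Q : ℝ[X]) {p : ℕ} (hp : p ≤ n) :
    zc n p (aeval (Jblock n)ᵀ Q *ᵥ Pi.single 0 1) =
      (taylor I (Q.map (algebraMap ℝ ℂ))).coeff p := by
  induction Q using Polynomial.induction_on' with
  | add Q R hQ hR =>
    rw [map_add, add_mulVec, ← zcₗ_apply, map_add, zcₗ_apply, zcₗ_apply, hQ, hR,
      Polynomial.map_add, map_add, coeff_add]
  | monomial k c =>
    rw [aeval_monomial, ← Algebra.smul_def, smul_mulVec, ← zcₗ_apply, map_smul, zcₗ_apply,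
      zc_transpose_pow_mulVec_single k hp, map_monomial, taylor_monomial, coeff_C_mul,
      Complex.real_smul]
    rfl

lemma eq_zero_of_aeval_transpose_mulVec_single_eq_zero {Q : ℝ[X]} (hQ : Q.natDegree < 2 * (n + 1))
    (h : aeval (Jblock n)ᵀ Q *ᵥ Pi.single 0 1 = 0) : Q = 0 := by
  refine eq_zero_of_X_sub_C_I_pow_dvd_map hQ (X_sub_C_pow_dvd_of_X_pow_dvd_taylor ?_)
  refine X_pow_dvd_iff.mpr fun p hp => ?_
  rw [← zc_aeval_transpose_mulVec_single Q (Nat.lt_succ_iff.mp hp), h, zc_zero]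

lemma transpose_pow_mulVec_krylovVec (i j : ℕ) :
    ((Jblock n)ᵀ) ^ i *ᵥ krylovVec n (j + i) = (-1 : ℝ) ^ i • krylovVec n j := by
  induction i with
  | zero => simp
  | succ i ih =>
    rw [pow_succ, ← mulVec_mulVec, ← add_assoc, transpose_mulVec_krylovVec_succ, mulVec_neg, ih,
      pow_succ, mul_neg_one, neg_smul]

lemma eq_zero_of_sum_smul_krylovVec_eq_zero {s : Fin (2 * (n + 1)) → ℝ}
    (h : ∑ j, s j • krylovVec n j = 0) : s = 0 := by
  set Q : ℝ[X] := ∑ j : Fin (2 * (n + 1)), monomial (Fin.rev j : ℕ) ((-1) ^ (j : ℕ) * s j)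
  have hQ : aeval (Jblock n)ᵀ Q *ᵥ Pi.single 0 1 =
      ((Jblock n)ᵀ) ^ (2 * n + 1) *ᵥ ∑ j, s j • krylovVec n j := by
    simp only [Q, map_sum, sum_mulVec, mulVec_sum, mulVec_smul]
    refine Finset.sum_congr rfl fun j _ => ?_
    have hj : 2 * n + 1 = (Fin.rev j : ℕ) + j := by simp only [Fin.val_rev]; omega
    have hjj := transpose_pow_mulVec_krylovVec (n := n) j 0
    rw [zero_add, krylovVec_zero] at hjj
    rw [aeval_monomial, ← Algebra.smul_def, smul_mulVec, hj, pow_add, ← mulVec_mulVec, hjj,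
      mulVec_smul, smul_smul, mul_comm (s j)]
  rw [h, mulVec_zero] at hQ
  have hQ0 : Q = 0 := by
    refine eq_zero_of_aeval_transpose_mulVec_single_eq_zero ?_ hQ
    refine (natDegree_sum_le_of_forall_le _ _ fun j _ =>
      (natDegree_monomial_le _).trans ?_).trans_lt (show 2 * n + 1 < 2 * (n + 1) by omega)
    simp only [Fin.val_rev]
    omega
  funext j
  have hcoeff := congrArg (coeff · (Fin.rev j : ℕ)) hQ0
  simp only [Q, finsetSum_coeff, coeff_monomial, Fin.val_inj, Fin.rev_inj] at hcoeff
  simpa using hcoeff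

noncomputable def krylovMatrix (n : ℕ) : Matrix (Fin (2 * (n + 1))) (Fin (2 * (n + 1))) ℝ :=
  Matrix.of fun i j => krylovVec n j i

lemma krylovMatrix_mulVec (s : Fin (2 * (n + 1)) → ℝ) :
    krylovMatrix n *ᵥ s = ∑ j, s j • krylovVec n j := by
  ext i
  simp [krylovMatrix, mulVec, dotProduct, mul_comm]

lemma isUnit_det_krylovMatrix : IsUnit (krylovMatrix n).det := by
  rw [isUnit_iff_ne_zero, Ne, ← Matrix.exists_mulVec_eq_zero_iff]
  rintro ⟨s, hs0, hs⟩
  rw [krylovMatrix_mulVec] at hs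
  exact hs0 (eq_zero_of_sum_smul_krylovVec_eq_zero hs)

noncomputable def Fₗ (n : ℕ) : (Fin (2 * (n + 1)) → ℝ) →ₗ[ℝ] ℂ :=
  ((n.factorial : ℂ) / 2 ^ n) • ((2 : ℂ) ^ n • zcₗ n n -
    ∑ l ∈ Finset.Icc 1 n, ((2 : ℂ) ^ (n - l) * (-I) ^ l) • (conjAe.toLinearMap ∘ₗ zcₗ n (n - l)))

lemma Fₗ_apply (x : Fin (2 * (n + 1)) → ℝ) :
    Fₗ n x = ((n.factorial : ℂ) / 2 ^ n) * (2 ^ n * zc n n x -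
      ∑ l ∈ Finset.Icc 1 n, 2 ^ (n - l) * (-I) ^ l * (starRingEnd ℂ) (zc n (n - l) x)) := by
  simp [Fₗ, LinearMap.sum_apply, smul_eq_mul]

lemma Fₗ_krylovVec (j : ℕ) :
    Fₗ n (krylovVec n j) = ((n.factorial : ℂ) / 2 ^ n) *
      (2 ^ n * I ^ (n + j) * ((n + j - 1).choose n : ℂ) -
        (-I) ^ (n + j) * ∑ i ∈ Finset.range n, 2 ^ i * ((i + j - 1).choose i : ℂ)) := by
  have hterm : ∀ l ∈ Finset.Icc 1 n, (2 : ℂ) ^ (n - l) * (-I) ^ l *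
      (starRingEnd ℂ) (zc n (n - l) (krylovVec n j)) =
      (-I) ^ (n + j) * (2 ^ (n - l) * ((n - l + j - 1).choose (n - l) : ℂ)) := by
    intro l hl
    have hln : l + (n - l + j) = n + j := by simp only [Finset.mem_Icc] at hl; omega
    rw [zc_krylovVec (Nat.sub_le n l), map_mul, map_pow, conj_I, map_natCast, add_comm j,
      ← hln, pow_add]
    ring
  rw [Fₗ_apply, zc_krylovVec le_rfl, Finset.sum_congr rfl hterm, ← Finset.mul_sum,
    ← Finset.Ico_add_one_right_eq_Icc,
    Finset.sum_Ico_reflect (fun i => (2 : ℂ) ^ i * ((i + j - 1).choose i : ℂ)) 1 le_rfl,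
    Nat.sub_self, Nat.add_sub_cancel, ← Finset.range_eq_Ico, add_comm j n]
  ring

noncomputable def dCoef (n j : ℕ) : ℝ :=
  ((n.factorial : ℝ) / 2 ^ n) * ∑ i ∈ Finset.range (n + 1), 2 ^ i * ((i + j - 1).choose i : ℝ)

noncomputable def bCoef (n j : ℕ) : ℝ :=
  2 * (n.factorial : ℝ) * ((n + j - 1).choose n : ℝ) - dCoef n j

lemma Fₗ_krylovVec_two_mul (hn : Even n) (r : ℕ) :
    Fₗ n (krylovVec n (2 * r)) = ((-1 : ℝ) ^ (n / 2 + r) * bCoef n (2 * r) : ℝ) := by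
  have hr : n + 2 * r = 2 * (n / 2 + r) := by have := Nat.even_iff.mp hn; omega
  have hI : I ^ (n + 2 * r) = (-1) ^ (n / 2 + r) := by rw [hr, pow_mul, I_sq]
  have hI' : (-I) ^ (n + 2 * r) = (-1) ^ (n / 2 + r) := by rw [hr, pow_mul, neg_sq, I_sq]
  rw [Fₗ_krylovVec, hI, hI', bCoef, dCoef, Finset.sum_range_succ]
  push_cast
  field_simp
  ring

lemma Fₗ_krylovVec_two_mul_add_one (hn : Even n) (r : ℕ) :
    Fₗ n (krylovVec n (2 * r + 1)) = ((-1 : ℝ) ^ (n / 2 + r) * dCoef n (2 * r + 1) : ℝ) * I := by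
  have hr : n + (2 * r + 1) = 2 * (n / 2 + r) + 1 := by have := Nat.even_iff.mp hn; omega
  have hI : I ^ (n + (2 * r + 1)) = (-1) ^ (n / 2 + r) * I := by rw [hr, pow_succ, pow_mul, I_sq]
  have hI' : (-I) ^ (n + (2 * r + 1)) = -((-1) ^ (n / 2 + r) * I) := by
    rw [hr, pow_succ, pow_mul, neg_sq, I_sq, mul_neg]
  rw [Fₗ_krylovVec, hI, hI', dCoef, Finset.sum_range_succ]
  push_cast
  field_simp
  ring

lemma re_sum_smul_Fₗ_krylovVec (hn : Even n) (s : Fin (2 * (n + 1)) → ℝ) :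
    (∑ j, s j • Fₗ n (krylovVec n j)).re = ∑ r : Fin (n + 1),
      (-1 : ℝ) ^ (n / 2 + (r : ℕ)) * bCoef n (2 * r) * s ⟨2 * r, by omega⟩ := by
  rw [re_sum]
  refine (Fintype.sum_of_injective (fun r : Fin (n + 1) => (⟨2 * r, by omega⟩ : Fin (2 * (n + 1))))
    (fun r r' h => by simpa [Fin.ext_iff] using h) _ _ (fun j hj => ?_) (fun r => ?_)).symm
  · have hodd : (j : ℕ) = 2 * (j / 2) + 1 := by
      by_contra h
      exact hj ⟨⟨j / 2, by omega⟩, Fin.ext (by simp only; omega)⟩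
    rw [hodd, Fₗ_krylovVec_two_mul_add_one hn, smul_re, re_ofReal_mul, I_re, mul_zero, smul_zero]
  · rw [Fₗ_krylovVec_two_mul hn, smul_re, ofReal_re, smul_eq_mul, mul_comm]

lemma im_sum_smul_Fₗ_krylovVec (hn : Even n) (s : Fin (2 * (n + 1)) → ℝ) :
    (∑ j, s j • Fₗ n (krylovVec n j)).im = ∑ r : Fin (n + 1),
      (-1 : ℝ) ^ (n / 2 + (r : ℕ)) * dCoef n (2 * r + 1) * s ⟨2 * r + 1, by omega⟩ := by
  rw [im_sum]
  refine (Fintype.sum_of_injective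
    (fun r : Fin (n + 1) => (⟨2 * r + 1, by omega⟩ : Fin (2 * (n + 1))))
    (fun r r' h => by simpa [Fin.ext_iff] using h) _ _ (fun j hj => ?_) (fun r => ?_)).symm
  · have heven : (j : ℕ) = 2 * (j / 2) := by
      by_contra h
      exact hj ⟨⟨j / 2, by omega⟩, Fin.ext (by simp only; omega)⟩
    rw [heven, Fₗ_krylovVec_two_mul hn, smul_im, ofReal_im, smul_zero]
  · rw [Fₗ_krylovVec_two_mul_add_one hn, smul_im, im_ofReal_mul, I_im, mul_one, smul_eq_mul,
      mul_comm]

end Jblock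

open Jblock

/-- Explicit form, in the companion-adapted coordinates `s = B⁻¹x`, of the solution
`F = F_n^{(1)}` of `∇f = M∇g` (`M` a single real Jordan block with eigenvalues `±i`,
`n` even): `Re F = Σ_r (−1)^{n/2+r} b_{2r} s_{2r}` and
`Im F = Σ_r (−1)^{n/2+r} d_{2r+1} s_{2r+1}`. -/
theorem stmt_13 (n : ℕ) (hn : Even n)
    (N : Matrix (Fin (2 * (n + 1))) (Fin (2 * (n + 1))) ℝ)
    (hN : N = -(Matrix.transpose (Jblock n)⁻¹))
    (B : Matrix (Fin (2 * (n + 1))) (Fin (2 * (n + 1))) ℝ)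
    (hB : B = Matrix.of fun i j : Fin (2 * (n + 1)) =>
      (N ^ (j : ℕ)).mulVec (Pi.single (0 : Fin (2 * (n + 1))) 1) i)
    (F : (Fin (2 * (n + 1)) → ℝ) → ℂ)
    (hF : ∀ x, F x = ((n.factorial : ℂ) / 2 ^ n) *
      (2 ^ n * zc n n x -
        ∑ l ∈ Finset.Icc 1 n,
          2 ^ (n - l) * (-Complex.I) ^ l * (starRingEnd ℂ) (zc n (n - l) x)))
    (d : ℕ → ℝ)
    (hd : ∀ j, d j = ((n.factorial : ℝ) / 2 ^ n) *
      ∑ i ∈ Finset.range (n + 1), 2 ^ i * ((i + j - 1).choose i : ℝ))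
    (b : ℕ → ℝ)
    (hb : ∀ j, b j = 2 * (n.factorial : ℝ) * ((n + j - 1).choose n : ℝ) - d j) :
    ∀ x : Fin (2 * (n + 1)) → ℝ,
      (F x).re = ∑ r : Fin (n + 1),
        (-1 : ℝ) ^ (n / 2 + (r : ℕ)) * b (2 * (r : ℕ)) *
          (B⁻¹.mulVec x) ⟨2 * (r : ℕ), by have := r.2; omega⟩ ∧
      (F x).im = ∑ r : Fin (n + 1),
        (-1 : ℝ) ^ (n / 2 + (r : ℕ)) * d (2 * (r : ℕ) + 1) *
          (B⁻¹.mulVec x) ⟨2 * (r : ℕ) + 1, by have := r.2; omega⟩ := by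
  intro x
  obtain rfl : B = krylovMatrix n := by
    ext i j
    rw [hB, hN, of_apply, neg_inv_transpose_pow_mulVec_single]
    rfl
  obtain rfl : d = dCoef n := funext hd
  obtain rfl : b = bCoef n := funext hb
  set s := (krylovMatrix n)⁻¹ *ᵥ x
  have hx : x = ∑ j, s j • krylovVec n j := by
    rw [← krylovMatrix_mulVec, mulVec_mulVec, mul_nonsing_inv _ isUnit_det_krylovMatrix,
      one_mulVec]
  have hFx : F x = ∑ j, s j • Fₗ n (krylovVec n j) := by
    rw [hF, ← Fₗ_apply, hx, map_sum]
    simp_rw [map_smul]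
  rw [hFx]
  exact ⟨re_sum_smul_Fₗ_krylovVec hn s, im_sum_smul_Fₗ_krylovVec hn s⟩
end
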